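/- arXiv:2310.08151 — 6 statements merged into one kernel-verified Lean document; each statement's English description precedes it below -/
import Mathlib

section
/- For any integers j and k with 1 ≤ j ≤ k, the complete homogeneous symmetric polynomial of degree j in k variables satisfies Σ_j(X_1,…,X_k) = Σ_{u+2v=j} σ_u(X_1,…,X_k) · Σ_v(X_1²,…,X_k²), where σ_u denotes the elementary symmetric polynomial of degree u and the sum runs over nonnegative integers u, v with u+2v=j. -/
open MvPolynomial Finset

section Aux

variable {k : ℕ}

/-- The finset of all multisets over `Fin k` of cardinality `v`. -/
private def Msets (k v : ℕ) : Finset (Multiset (Fin k)) :=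
  (Finset.univ : Finset (Sym (Fin k) v)).map ⟨Sym.toMultiset, Sym.coe_injective⟩

private lemma mem_Msets {v : ℕ} {m : Multiset (Fin k)} :
    m ∈ Msets k v ↔ Multiset.card m = v := by
  simp only [Msets, Finset.mem_map, Finset.mem_univ, true_and,
    Function.Embedding.coeFn_mk]
  constructor
  · rintro ⟨t, rfl⟩; exact t.2
  · intro h; exact ⟨⟨m, h⟩, rfl⟩

private lemma hsymm_eq_sum_Msets (v : ℕ) :
    hsymm (Fin k) ℤ v = ∑ m ∈ Msets k v, (m.map X).prod := by
  rw [hsymm, Msets, Finset.sum_map]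
  rfl

/-- The squarefree (odd-multiplicity) part of a multiset. -/
private def oddPart (w : Multiset (Fin k)) : Finset (Fin k) :=
  w.toFinset.filter (fun i => Odd (w.count i))

/-- Half of the remaining part of a multiset. -/
private noncomputable def halfPart (w : Multiset (Fin k)) : Multiset (Fin k) :=
  Finsupp.toMultiset (Finsupp.mapRange (· / 2) (Nat.zero_div 2) w.toFinsupp)

private lemma count_oddPart (w : Multiset (Fin k)) (a : Fin k) :
    (oddPart w).val.count a = if w.count a % 2 = 1 then 1 else 0 := by
  rw [oddPart, Multiset.count_eq_of_nodup (Finset.nodup _)]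
  simp only [Finset.mem_val, Finset.mem_filter, Multiset.mem_toFinset, Nat.odd_iff]
  by_cases h : w.count a % 2 = 1
  · rw [if_pos ⟨Multiset.count_pos.1 (by omega), h⟩, if_pos h]
  · rw [if_neg (fun hc => h hc.2), if_neg h]

private lemma count_halfPart (w : Multiset (Fin k)) (a : Fin k) :
    (halfPart w).count a = w.count a / 2 := by
  simp [halfPart, Finsupp.count_toMultiset, Finsupp.mapRange_apply,
    Multiset.toFinsupp_apply]

private lemma decomp (w : Multiset (Fin k)) :
    (oddPart w).val + (halfPart w + halfPart w) = w := by
  ext a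
  simp only [Multiset.count_add, count_oddPart, count_halfPart]
  have := Nat.div_add_mod (w.count a) 2
  split <;> omega

private lemma count_recomp (s : Finset (Fin k)) (m : Multiset (Fin k)) (a : Fin k) :
    (s.val + (m + m)).count a = (if a ∈ s then 1 else 0) + 2 * m.count a := by
  simp only [Multiset.count_add, Multiset.count_eq_of_nodup s.nodup, Finset.mem_val]
  split <;> omega

private lemma oddPart_recomp (s : Finset (Fin k)) (m : Multiset (Fin k)) :
    oddPart (s.val + (m + m)) = s := by
  ext a
  simp only [oddPart, Finset.mem_filter, Multiset.mem_toFinset, ← Multiset.count_pos,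
    Nat.odd_iff, count_recomp]
  by_cases h : a ∈ s <;> simp only [h, if_true, if_false, iff_true, iff_false, not_and] <;> omega

private lemma halfPart_recomp (s : Finset (Fin k)) (m : Multiset (Fin k)) :
    halfPart (s.val + (m + m)) = m := by
  ext a
  rw [count_halfPart, count_recomp]
  split <;> omega

end Aux

/-- The identity `Σ_j(X_1,…,X_k) = Σ_{u+2v=j} σ_u(X_1,…,X_k) · Σ_v(X_1²,…,X_k²)`
for complete homogeneous and elementary symmetric polynomials over `ℤ`. -/
theorem hsymm_eq_sum_esymm_mul_hsymm_sq (j k : ℕ) (hj : 1 ≤ j) (hjk : j ≤ k) :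
    hsymm (Fin k) ℤ j =
      ∑ p ∈ (Finset.range (j + 1) ×ˢ Finset.range (j + 1)).filter
          (fun p => p.1 + 2 * p.2 = j),
        esymm (Fin k) ℤ p.1 *
          bind₁ (fun i => (X i : MvPolynomial (Fin k) ℤ) ^ 2) (hsymm (Fin k) ℤ p.2) := by
  have hbind : ∀ v : ℕ,
      bind₁ (fun i => (X i : MvPolynomial (Fin k) ℤ) ^ 2) (hsymm (Fin k) ℤ v) =
        ∑ m ∈ Msets k v, ((m + m).map X).prod := by
    intro v
    rw [hsymm_eq_sum_Msets, map_sum]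
    refine Finset.sum_congr rfl fun m _ => ?_
    rw [map_multiset_prod, Multiset.map_map]
    simp only [Function.comp, bind₁_X_right]
    rw [Multiset.prod_map_pow, Multiset.map_add, Multiset.prod_add, sq]
  have hesymm : ∀ u : ℕ, esymm (Fin k) ℤ u =
      ∑ s ∈ Finset.powersetCard u Finset.univ, ((s.val.map X).prod :
        MvPolynomial (Fin k) ℤ) := by
    intro u
    rw [esymm]
    exact Finset.sum_congr rfl fun s _ => Finset.prod_eq_multiset_prod _ _
  calc hsymm (Fin k) ℤ j = ∑ w ∈ Msets k j, (w.map X).prod := hsymm_eq_sum_Msets j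
    _ = ∑ z ∈ ((Finset.range (j + 1) ×ˢ Finset.range (j + 1)).filter
          (fun p => p.1 + 2 * p.2 = j)).sigma
          (fun p => (Finset.powersetCard p.1 Finset.univ).sigma fun _ => Msets k p.2),
        (((z.2.1.val + (z.2.2 + z.2.2)).map X).prod : MvPolynomial (Fin k) ℤ) := by
      refine Finset.sum_nbij'
        (fun w => ⟨((oddPart w).card, Multiset.card (halfPart w)), oddPart w, halfPart w⟩)
        (fun z => z.2.1.val + (z.2.2 + z.2.2)) ?_ ?_ ?_ ?_ ?_
      · intro w hw
        rw [mem_Msets] at hw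
        have hcard : Multiset.card (oddPart w).val + (Multiset.card (halfPart w) +
            Multiset.card (halfPart w)) = j := by
          have h2 := congrArg Multiset.card (decomp w)
          rwa [Multiset.card_add, Multiset.card_add, hw] at h2
        have hb : (oddPart w).card = Multiset.card (oddPart w).val := rfl
        refine Finset.mem_sigma.2 ⟨?_, Finset.mem_sigma.2 ⟨?_, ?_⟩⟩
        · simp only [Finset.mem_filter, Finset.mem_product, Finset.mem_range]
          omega
        · exact Finset.mem_powersetCard.2 ⟨Finset.subset_univ _, rfl⟩
        · exact mem_Msets.2 rfl
      · rintro ⟨p, s, m⟩ hz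
        simp only [Finset.mem_sigma, Finset.mem_filter, Finset.mem_product,
          Finset.mem_range, Finset.mem_powersetCard, mem_Msets] at hz
        rw [mem_Msets]
        simp only [Multiset.card_add]
        have : (s.val : Multiset (Fin k)).card = s.card := rfl
        omega
      · intro w _
        exact decomp w
      · rintro ⟨p, s, m⟩ hz
        simp only [Finset.mem_sigma, Finset.mem_filter, Finset.mem_product,
          Finset.mem_range, Finset.mem_powersetCard, mem_Msets] at hz
        obtain ⟨⟨_, hpj⟩, ⟨_, hscard⟩, hmcard⟩ := hz
        simp only [oddPart_recomp, halfPart_recomp, hscard, hmcard]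
      · intro w _
        rw [decomp w]
    _ = _ := by
      rw [Finset.sum_sigma]
      refine Finset.sum_congr rfl fun p _ => ?_
      rw [Finset.sum_sigma, hbind, hesymm, Finset.sum_mul_sum]
      refine Finset.sum_congr rfl fun s _ => Finset.sum_congr rfl fun m _ => ?_
      rw [← Multiset.prod_add, ← Multiset.map_add]
end

section
/- If m is an even positive integer and a_1,…,a_v are real numbers, then the complete homogeneous symmetric polynomial Σ_m(a_1,…,a_v) is nonnegative, and Σ_m(a_1,…,a_v) = 0 if and only if a_1 = ⋯ = a_v = 0. -/
/-!
If `Z₁, …, Z_v` are independent standard exponential random variables, then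
`𝔼[Z₁^α₁ ⋯ Z_v^α_v] = α₁! ⋯ α_v!`, so the multinomial theorem turns
`𝔼[(a₁Z₁ + ⋯ + a_vZ_v)^m]` into `m! · Σ_m(a₁, …, a_v)`. For even `m` the integrand is
nonnegative. If the expectation vanishes, the linear form `Σ aᵢ zᵢ` vanishes almost surely,
hence everywhere on the open positive orthant, since the law of `Z` charges every open set
meeting it; a linear form vanishing there is zero.
-/

open MvPolynomial Nat MeasureTheory ProbabilityTheory Real Set

namespace Multiset

variable {α : Type*} [Fintype α] [DecidableEq α]

theorem prod_map_eq_prod_pow_count {M : Type*} [CommMonoid M] (s : Multiset α) (f : α → M) :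
    (s.map f).prod = ∏ a, f a ^ s.count a := by
  rw [prod_map_eq_finprod, finprod_eq_prod_of_fintype]

theorem prod_factorial_count_mul_countPerms (s : Multiset α) :
    (∏ a, (s.count a)!) * s.countPerms = (card s)! := by
  rw [countPerms, Finsupp.multinomial_eq_of_support_subset (Finset.subset_univ _)]
  simpa using Nat.multinomial_spec Finset.univ (toFinsupp s)

end Multiset

section Multinomial

variable {ι : Type*} [Fintype ι] [DecidableEq ι] {R : Type*} [CommSemiring R]

theorem sum_pow_eq_sum_sym (x : ι → R) (m : ℕ) :
    (∑ i, x i) ^ m =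
      ∑ s : Sym ι m, (s : Multiset ι).countPerms * ∏ i, x i ^ (s : Multiset ι).count i := by
  simp_rw [Finset.sum_pow, Finset.sym_univ, Multiset.prod_map_eq_prod_pow_count]
  rfl

theorem eval_hsymm_eq_sum_sym (x : ι → R) (m : ℕ) :
    eval x (hsymm ι R m) = ∑ s : Sym ι m, ∏ i, x i ^ (s : Multiset ι).count i := by
  simp [hsymm, Multiset.prod_map_eq_prod_pow_count]

end Multinomial

section ExponentialMeasure

instance : IsProbabilityMeasure (expMeasure 1) := isProbabilityMeasure_expMeasure one_pos

theorem measurable_exponentialPDF (r : ℝ) : Measurable (exponentialPDF r) :=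
  (measurable_exponentialPDFReal r).ennreal_ofReal

theorem expMeasure_eq_withDensity (r : ℝ) :
    expMeasure r = volume.withDensity (exponentialPDF r) :=
  rfl

theorem integral_pow_expMeasure {r : ℝ} (hr : 0 < r) (k : ℕ) :
    ∫ x, x ^ k ∂expMeasure r = k ! / r ^ k := by
  have hdensity : ∀ x, (exponentialPDF r x).toReal • x ^ k
      = (Ici 0).indicator (fun x => x ^ ((k + 1 : ℝ) - 1) * exp (-(r * x)) * r) x := by
    intro x
    rcases lt_or_ge x 0 with hx | hx
    · simp [exponentialPDF_of_neg hx, hx]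
    · rw [exponentialPDF_of_nonneg hx, ENNReal.toReal_ofReal (by positivity),
        indicator_of_mem (mem_Ici.mpr hx), add_sub_cancel_right, rpow_natCast, smul_eq_mul]
      ring
  rw [expMeasure_eq_withDensity, integral_withDensity_eq_integral_toReal_smul
    (measurable_exponentialPDF r) (ae_of_all _ fun _ => ENNReal.ofReal_lt_top)]
  simp_rw [hdensity]
  rw [integral_indicator measurableSet_Ici, integral_Ici_eq_integral_Ioi, integral_mul_const,
    integral_rpow_mul_exp_neg_mul_Ioi (by positivity) hr, Gamma_nat_eq_factorial,
    ← Nat.cast_add_one, rpow_natCast, one_div_pow, pow_succ]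
  field_simp

theorem expMeasure_pos_of_isOpen {r : ℝ} (hr : 0 < r) {U : Set ℝ} (hU : IsOpen U)
    (hUpos : (U ∩ Ioi 0).Nonempty) : 0 < expMeasure r U := by
  refine pos_iff_ne_zero.mpr fun h => ?_
  rw [expMeasure_eq_withDensity,
    withDensity_apply_eq_zero' (measurable_exponentialPDF r).aemeasurable] at h
  refine (hU.inter isOpen_Ioi).measure_ne_zero volume hUpos (measure_mono_null ?_ h)
  rintro x ⟨hxU, hx⟩
  exact ⟨(ENNReal.ofReal_pos.mpr (exponentialPDFReal_pos hr hx)).ne', hxU⟩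

end ExponentialMeasure

section ProductExponentialMeasure

variable {ι : Type*} [Fintype ι]

theorem integral_prod_pow_pi_expMeasure (k : ι → ℕ) :
    ∫ z, ∏ i, z i ^ k i ∂Measure.pi (fun _ => expMeasure 1) = ∏ i, ((k i)! : ℝ) := by
  simp [integral_fintype_prod_eq_prod (fun i (x : ℝ) => x ^ k i), integral_pow_expMeasure one_pos]

theorem integrable_prod_pow_pi_expMeasure (k : ι → ℕ) :
    Integrable (fun z : ι → ℝ => ∏ i, z i ^ k i) (Measure.pi fun _ => expMeasure 1) :=
  .of_integral_ne_zero <| by rw [integral_prod_pow_pi_expMeasure]; positivity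

theorem pi_expMeasure_pos_of_isOpen {U : Set (ι → ℝ)} (hU : IsOpen U) {x : ι → ℝ} (hxU : x ∈ U)
    (hx : ∀ i, 0 < x i) : 0 < Measure.pi (fun _ => expMeasure 1) U := by
  obtain ⟨ε, hε, hball⟩ := Metric.isOpen_iff.mp hU x hxU
  refine lt_of_lt_of_le ?_ (measure_mono hball)
  rw [ball_pi x hε, Measure.pi_pi]
  exact CanonicallyOrderedAdd.prod_pos.mpr fun i _ =>
    expMeasure_pos_of_isOpen one_pos Metric.isOpen_ball ⟨x i, Metric.mem_ball_self hε, hx i⟩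

theorem eq_zero_of_ae_pi_expMeasure_eq_zero {f : (ι → ℝ) → ℝ} (hf : Continuous f)
    (h : ∀ᵐ z ∂Measure.pi (fun _ => expMeasure 1), f z = 0) {x : ι → ℝ} (hx : ∀ i, 0 < x i) :
    f x = 0 := by
  by_contra hfx
  exact (pi_expMeasure_pos_of_isOpen (isOpen_ne_fun hf continuous_const) hfx hx).ne'
    (ae_iff.mp h)

variable [DecidableEq ι]

theorem sum_mul_pow_eq_sum_sym (a z : ι → ℝ) (m : ℕ) :
    (∑ i, a i * z i) ^ m = ∑ s : Sym ι m, (s : Multiset ι).countPerms *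
      ((∏ i, a i ^ (s : Multiset ι).count i) * ∏ i, z i ^ (s : Multiset ι).count i) := by
  simp_rw [sum_pow_eq_sum_sym, mul_pow, Finset.prod_mul_distrib]

theorem integrable_sum_mul_pow (a : ι → ℝ) (m : ℕ) :
    Integrable (fun z : ι → ℝ => (∑ i, a i * z i) ^ m) (Measure.pi fun _ => expMeasure 1) := by
  simp_rw [sum_mul_pow_eq_sum_sym a _ m]
  exact integrable_finsetSum _ fun s _ =>
    ((integrable_prod_pow_pi_expMeasure _).const_mul _).const_mul _

theorem integral_sum_mul_pow_eq_factorial_mul_eval_hsymm (a : ι → ℝ) (m : ℕ) :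
    ∫ z, (∑ i, a i * z i) ^ m ∂Measure.pi (fun _ => expMeasure 1)
      = m ! * eval a (hsymm ι ℝ m) := by
  simp_rw [sum_mul_pow_eq_sum_sym a _ m]
  rw [integral_finsetSum _ fun s _ =>
    ((integrable_prod_pow_pi_expMeasure _).const_mul _).const_mul _]
  simp_rw [integral_const_mul, integral_prod_pow_pi_expMeasure, eval_hsymm_eq_sum_sym,
    Finset.mul_sum]
  refine Finset.sum_congr rfl fun s _ => ?_
  have hcount : (∏ i, (((s : Multiset ι).count i)! : ℝ)) * (s : Multiset ι).countPerms = m ! := by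
    exact_mod_cast Sym.card_coe (s := s) ▸
      Multiset.prod_factorial_count_mul_countPerms (s : Multiset ι)
  linear_combination (∏ i, a i ^ (s : Multiset ι).count i) * hcount

end ProductExponentialMeasure

theorem eq_zero_of_forall_pos_sum_mul_eq_zero {ι : Type*} [Fintype ι] [DecidableEq ι]
    {a : ι → ℝ} (h : ∀ z : ι → ℝ, (∀ i, 0 < z i) → ∑ i, a i * z i = 0) : a = 0 := by
  funext j
  have h_one := h 1 fun _ => one_pos
  have h_bump := h (1 + Pi.single j 1) fun i => by
    rcases eq_or_ne i j with rfl | hij <;> simp [*]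
  simp only [Pi.add_apply, mul_add, Finset.sum_add_distrib, Pi.one_apply, mul_one] at h_one h_bump
  simpa [h_one, Pi.single_apply] using h_bump

theorem hsymm_even_nonneg_general (m v : ℕ) (hm : Even m) (hm0 : 0 < m)
    (a : Fin v → ℝ) :
    0 ≤ eval a (hsymm (Fin v) ℝ m) ∧
      (eval a (hsymm (Fin v) ℝ m) = 0 ↔ ∀ i, a i = 0) := by
  have hint := integral_sum_mul_pow_eq_factorial_mul_eval_hsymm a m
  have hfac : (0 : ℝ) < m ! := by positivity
  have hpow_nonneg : 0 ≤ fun z : Fin v → ℝ => (∑ i, a i * z i) ^ m := fun z => hm.pow_nonneg _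
  refine ⟨nonneg_of_mul_nonneg_right (hint ▸ integral_nonneg hpow_nonneg) hfac,
    fun h => ?_, fun h => ?_⟩
  · rw [h, mul_zero, integral_eq_zero_iff_of_nonneg hpow_nonneg (integrable_sum_mul_pow a m)]
      at hint
    refine congrFun (eq_zero_of_forall_pos_sum_mul_eq_zero fun z hz => ?_)
    exact (pow_eq_zero_iff hm0.ne').mp (eq_zero_of_ae_pi_expMeasure_eq_zero (by fun_prop) hint hz)
  · simpa [funext h, zero_pow hm0.ne', hfac.ne'] using hint.symm

/-- For `m` even and positive, the complete homogeneous symmetric polynomial of degree `m`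
evaluated at real numbers is nonnegative, and vanishes iff all arguments vanish. -/
theorem hsymm_even_nonneg (m v : ℕ) (hm : Even m) (hm0 : 0 < m) (hv : 1 ≤ v)
    (a : Fin v → ℝ) :
    0 ≤ eval a (hsymm (Fin v) ℝ m) ∧
      (eval a (hsymm (Fin v) ℝ m) = 0 ↔ ∀ i, a i = 0) :=
  hsymm_even_nonneg_general m v hm hm0 a
end

section
/- Let m be odd, and let a_1,…,a_v be real numbers with σ_u(a_1,…,a_v) ≥ 0 for all u, and suppose Σ_m(a_1,…,a_v) = 0. Then for every pair of nonnegative integers (u, v') with u + 2v' = m, one has σ_u(a_1,…,a_v) · Σ_{v'}(a_1²,…,a_v²) = 0. -/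
open MvPolynomial Finset

/-!
Over any commutative ring, `∑ₙ Σₙ(a) tⁿ = ∏ᵢ (1 - aᵢ t)⁻¹` and `∑ₙ σₙ(a) tⁿ = ∏ᵢ (1 + aᵢ t)`.
Since `(1 + aᵢ t)(1 - aᵢ t) = 1 - aᵢ² t²`, the first series is the product of the second with
`∑_w Σ_w(a²) t^{2w}`, i.e. `Σ_m(a) = ∑_{u + 2w = m} σ_u(a) Σ_w(a²)`. Over `ℝ` every summand is
nonnegative (`Σ_w(a²)` is a sum of products of squares), so all of them vanish when `Σ_m(a)` does.
-/

theorem Multiset.prod_map_eq_prod_pow_count_s5 {ι M : Type*} [Fintype ι] [DecidableEq ι]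
    [CommMonoid M] (s : Multiset ι) (f : ι → M) : (s.map f).prod = ∏ i, f i ^ s.count i := by
  rw [Finset.prod_multiset_map_count]
  exact prod_subset (subset_univ _) fun i _ hi => by
    rw [Multiset.count_eq_zero_of_notMem (by simpa using hi), pow_zero]

noncomputable def Sym.equivFinsuppAntidiag (σ : Type*) [Fintype σ] [DecidableEq σ] (n : ℕ) :
    Sym σ n ≃ (univ : Finset σ).finsuppAntidiag n :=
  (Sym.equivNatSum σ n).trans (Equiv.subtypeEquivRight fun l => by simp [Finsupp.sum_fintype])

theorem PowerSeries.mk_pow_mul_one_sub_C_mul_X {R : Type*} [CommRing R] (r : R) :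
    (mk fun k => r ^ k) * (1 - C r * X) = 1 := by
  simpa [rescale_mk, rescale_X] using congrArg (rescale r) (mk_one_mul_one_sub_eq_one R)

namespace MvPolynomial

variable {σ R : Type*} [Fintype σ]

theorem eval_hsymm_nonneg [DecidableEq σ] [CommSemiring R] [PartialOrder R] [IsOrderedRing R]
    {x : σ → R} (hx : ∀ i, 0 ≤ x i) (n : ℕ) : 0 ≤ eval x (hsymm σ R n) := by
  simp only [hsymm, map_sum, map_multiset_prod, Multiset.map_map, Function.comp_def, eval_X]
  exact sum_nonneg fun s _ => Multiset.prod_nonneg fun y hy => by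
    obtain ⟨i, -, rfl⟩ := Multiset.mem_map.1 hy
    exact hx i

variable [CommRing R] (a : σ → R)

theorem mk_eval_esymm :
    PowerSeries.mk (fun n => eval a (esymm σ R n)) =
      ∏ i, (1 + PowerSeries.C (a i) * PowerSeries.X) := by
  ext n
  simp only [prod_one_add, prod_mul_distrib, prod_const, ← map_prod, map_sum,
    PowerSeries.coeff_C_mul_X_pow, sum_ite, sum_const_zero, add_zero, PowerSeries.coeff_mk,
    esymm, powersetCard_eq_filter, eval_prod, eval_X]
  exact sum_congr (by ext; simp [eq_comm]) fun _ _ => rfl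

variable [DecidableEq σ]

theorem mk_eval_hsymm :
    PowerSeries.mk (fun n => eval a (hsymm σ R n)) = ∏ i, PowerSeries.mk fun k => a i ^ k := by
  ext n
  rw [PowerSeries.coeff_mk, PowerSeries.coeff_prod, ← sum_coe_sort,
    ← (Sym.equivFinsuppAntidiag σ n).sum_comp]
  simp only [PowerSeries.coeff_mk, hsymm, map_sum, map_multiset_prod, Multiset.map_map,
    Function.comp_def, eval_X]
  exact sum_congr rfl fun s _ => Multiset.prod_map_eq_prod_pow_count_s5 _ _

theorem mk_eval_hsymm_mul_prod_one_sub :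
    PowerSeries.mk (fun n => eval a (hsymm σ R n)) *
      ∏ i, (1 - PowerSeries.C (a i) * PowerSeries.X) = 1 := by
  rw [mk_eval_hsymm, ← prod_mul_distrib]
  exact prod_eq_one fun i _ => PowerSeries.mk_pow_mul_one_sub_C_mul_X (a i)

theorem mk_eval_hsymm_eq_mul_expand :
    PowerSeries.mk (fun n => eval a (hsymm σ R n)) =
      PowerSeries.mk (fun n => eval a (esymm σ R n)) *
        PowerSeries.expand 2 two_ne_zero
          (PowerSeries.mk fun n => eval (fun i => a i ^ 2) (hsymm σ R n)) := by
  set H := PowerSeries.mk fun n => eval a (hsymm σ R n)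
  set E := PowerSeries.mk fun n => eval a (esymm σ R n)
  set H₂ := PowerSeries.mk fun n => eval (fun i => a i ^ 2) (hsymm σ R n)
  set P := ∏ i, (1 - PowerSeries.C (a i) * PowerSeries.X)
  have hHP : H * P = 1 := mk_eval_hsymm_mul_prod_one_sub a
  have hEP : E * P =
      PowerSeries.expand 2 two_ne_zero (∏ i, (1 - PowerSeries.C (a i ^ 2) * PowerSeries.X)) := by
    simp only [E, P, mk_eval_esymm, ← prod_mul_distrib, map_prod, map_sub, map_one, map_mul,
      PowerSeries.expand_C, PowerSeries.expand_X]
    exact prod_congr rfl fun i _ => by rw [map_pow]; ring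
  have hinv : E * PowerSeries.expand 2 two_ne_zero H₂ * P = 1 := by
    rw [mul_right_comm, hEP, mul_comm, ← map_mul, mk_eval_hsymm_mul_prod_one_sub, map_one]
  linear_combination (E * PowerSeries.expand 2 two_ne_zero H₂) * hHP - H * hinv

theorem eval_hsymm_eq_sum_antidiagonal (m : ℕ) :
    eval a (hsymm σ R m) = ∑ p ∈ antidiagonal m, eval a (esymm σ R p.1) *
      if 2 ∣ p.2 then eval (fun i => a i ^ 2) (hsymm σ R (p.2 / 2)) else 0 := by
  simpa [PowerSeries.coeff_mul, PowerSeries.coeff_expand] using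
    congrArg (PowerSeries.coeff m) (mk_eval_hsymm_eq_mul_expand a)

end MvPolynomial

theorem summand_eq_zero_of_hsymm_eq_zero_general (m v : ℕ) (a : Fin v → ℝ)
    (he : ∀ u, 0 ≤ eval a (esymm (Fin v) ℝ u))
    (h0 : eval a (hsymm (Fin v) ℝ m) = 0) :
    ∀ u v', u + 2 * v' = m →
      eval a (esymm (Fin v) ℝ u) * eval (fun i => a i ^ 2) (hsymm (Fin v) ℝ v') = 0 := by
  intro u v' huv
  have hterm_nonneg : ∀ p ∈ antidiagonal m, 0 ≤ eval a (esymm (Fin v) ℝ p.1) *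
      if 2 ∣ p.2 then eval (fun i => a i ^ 2) (hsymm (Fin v) ℝ (p.2 / 2)) else 0 := by
    refine fun p _ => mul_nonneg (he _) ?_
    split_ifs
    exacts [eval_hsymm_nonneg (fun i => sq_nonneg (a i)) _, le_rfl]
  rw [eval_hsymm_eq_sum_antidiagonal, sum_eq_zero_iff_of_nonneg hterm_nonneg] at h0
  simpa using h0 (u, 2 * v') (mem_antidiagonal.2 huv)

/-- If `m` is odd, all elementary symmetric polynomials of the real numbers `a_i` are
nonnegative, and `Σ_m(a) = 0`, then each summand `σ_u(a) · Σ_{v'}(a²)` with `u + 2v' = m`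
vanishes. -/
theorem summand_eq_zero_of_hsymm_eq_zero (m v : ℕ) (hm : Odd m) (a : Fin v → ℝ)
    (he : ∀ u, 0 ≤ eval a (esymm (Fin v) ℝ u))
    (h0 : eval a (hsymm (Fin v) ℝ m) = 0) :
    ∀ u v', u + 2 * v' = m →
      eval a (esymm (Fin v) ℝ u) * eval (fun i => a i ^ 2) (hsymm (Fin v) ℝ v') = 0 :=
  summand_eq_zero_of_hsymm_eq_zero_general m v a he h0
end

section
/- Let a, b_1 be integers and define a sequence (b_l) by b_0 = 1, b_1 given, and b_l = b_{l−1}·b_1 + b_{l−2}·(a² + a·b_1) for l ≥ 2. If a ≥ 0 and a + b_1 ≥ 0, then for every l ≥ 1: if l is odd then b_1·b_l ≥ 0, and if l is even then b_l ≥ 0. -/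
/-- Sign analysis for the sequence `b_l = b_{l−1}·b_1 + b_{l−2}·(a² + a·b_1)` with
`b_0 = 1`, `a ≥ 0`, `a + b_1 ≥ 0`: for `l ≥ 1`, `b_1·b_l ≥ 0` if `l` is odd and
`b_l ≥ 0` if `l` is even. -/
theorem sign_of_recurrence (a : ℤ) (b : ℕ → ℤ) (hb0 : b 0 = 1)
    (hrec : ∀ l, 2 ≤ l → b l = b (l - 1) * b 1 + b (l - 2) * (a ^ 2 + a * b 1))
    (ha : 0 ≤ a) (hab : 0 ≤ a + b 1) :
    ∀ l, 1 ≤ l → (Odd l → 0 ≤ b 1 * b l) ∧ (Even l → 0 ≤ b l) := by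
  have hc : 0 ≤ a ^ 2 + a * b 1 := by nlinarith
  intro l
  induction l using Nat.strong_induction_on with
  | _ l ih =>
    intro hl
    match l, hl with
    | 1, _ =>
      refine ⟨fun _ => mul_self_nonneg _, fun h => ?_⟩
      simp [Nat.even_iff] at h
    | 2, _ =>
      refine ⟨fun h => ?_, fun _ => ?_⟩
      · simp [Nat.odd_iff] at h
      · have hr := hrec 2 (by omega)
        norm_num at hr
        rw [hr, hb0]
        nlinarith [mul_self_nonneg (b 1)]
    | (n + 3), _ =>
      have h1 := ih (n + 2) (by omega) (by omega)
      have h2 := ih (n + 1) (by omega) (by omega)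
      have hr := hrec (n + 3) (by omega)
      norm_num at hr
      rw [show n + 3 - 2 = n + 1 from rfl] at hr
      constructor
      · rintro ⟨k, hk⟩
        have he : Even (n + 2) := ⟨k, by omega⟩
        have ho : Odd (n + 1) := ⟨k - 1, by omega⟩
        have e1 := h1.2 he
        have e2 := h2.1 ho
        rw [hr]
        nlinarith [mul_self_nonneg (b 1), mul_nonneg hc e2]
      · rintro ⟨k, hk⟩
        have ho : Odd (n + 2) := ⟨k - 1, by omega⟩
        have he : Even (n + 1) := ⟨k - 1, by omega⟩
        have e1 := h1.1 ho
        have e2 := h2.2 he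
        rw [hr]
        nlinarith [mul_nonneg hc e2]
end

section
/- Let a, b_1 be integers with a ≥ 0 and a + b_1 ≥ 0, and define b_0 = 1, b_l = b_{l−1}·b_1 + b_{l−2}·(a² + a·b_1) for l ≥ 2. If b_{2k} = 0 for some k ≥ 1, then a = 0 and b_l = 0 for all l ≥ 1. -/
/-- If the sequence `b_l = b_{l−1}·b_1 + b_{l−2}·(a² + a·b_1)`, `b_0 = 1`, with `a ≥ 0`,
`a + b_1 ≥ 0`, satisfies `b_{2k} = 0` for some `k ≥ 1`, then `a = 0` and `b_l = 0`
for all `l ≥ 1`. -/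
theorem vanishing_of_recurrence (a : ℤ) (b : ℕ → ℤ) (hb0 : b 0 = 1)
    (hrec : ∀ l, 2 ≤ l → b l = b (l - 1) * b 1 + b (l - 2) * (a ^ 2 + a * b 1))
    (ha : 0 ≤ a) (hab : 0 ≤ a + b 1)
    (k : ℕ) (hk : 1 ≤ k) (hz : b (2 * k) = 0) :
    a = 0 ∧ ∀ l, 1 ≤ l → b l = 0 := by
  have key : ∀ l, (2 * a + b 1) * b l = (a + b 1) ^ (l + 1) - (-a) ^ (l + 1) := by
    intro l
    induction l using Nat.strong_induction_on with
    | _ l ih =>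
      match l with
      | 0 => rw [hb0]; ring
      | 1 => ring
      | (n + 2) =>
        have h1 := ih (n + 1) (by omega)
        have h0 := ih n (by omega)
        have hr := hrec (n + 2) (by omega)
        have e1 : n + 2 - 1 = n + 1 := rfl
        have e2 : n + 2 - 2 = n := rfl
        rw [e1, e2] at hr
        linear_combination (2 * a + b 1) * hr + (b 1) * h1 + (a ^ 2 + a * b 1) * h0
  have hkey := key (2 * k)
  rw [hz, mul_zero] at hkey
  have hodd : (-a) ^ (2 * k + 1) = -(a ^ (2 * k + 1)) := by
    rw [neg_pow]
    simp [pow_succ, pow_mul]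
  have hsum : (a + b 1) ^ (2 * k + 1) + a ^ (2 * k + 1) = 0 := by
    rw [hodd] at hkey; linarith
  have h1 : (0:ℤ) ≤ (a + b 1) ^ (2 * k + 1) := pow_nonneg hab _
  have h2 : (0:ℤ) ≤ a ^ (2 * k + 1) := pow_nonneg ha _
  have hap : a ^ (2 * k + 1) = 0 := by linarith
  have hbp : (a + b 1) ^ (2 * k + 1) = 0 := by linarith
  have ha0 : a = 0 := by
    have := pow_eq_zero_iff (n := 2 * k + 1) (by omega) |>.mp hap
    exact this
  have hb1 : b 1 = 0 := by
    have := pow_eq_zero_iff (n := 2 * k + 1) (by omega) |>.mp hbp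
    omega
  refine ⟨ha0, ?_⟩
  intro l hl
  match l with
  | 1 => exact hb1
  | (n + 2) =>
    have hr := hrec (n + 2) (by omega)
    rw [hr, hb1, ha0]
    ring
end

section
/- Let n, m be integers with m > 1, and suppose a_1, …, a_{n−m+2} are integers satisfying: (i) Σ_m(a_1,…,a_{n−m+2}) = 0, and (ii) σ_u(a_1,…,a_{n−m+2}) ≥ 0 for every 1 ≤ u ≤ n−m+2. Then a_1 = ⋯ = a_{n−m+2} = 0. -/
/-!
If some `a j < 0`, evaluate `∏ i, (X + a i) = ∑ u, σ_u(a) X^(N-u)` at `X = -a j > 0`: the left side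
vanishes, while on the right every term is nonnegative and the `u = 0` term is `(-a j)^N > 0`.
So all `a i ≥ 0`, and then `Σ_m(a)` is a sum of nonnegative monomials, one of which is `a i ^ m`.
-/

open MvPolynomial

namespace Multiset

variable {R : Type*}

theorem prod_map_add_eq_sum_esymm [CommSemiring R] (s : Multiset R) (x : R) :
    (s.map (x + ·)).prod = ∑ j ∈ Finset.range (card s + 1), s.esymm j * x ^ (card s - j) := by
  simpa [Polynomial.eval_multiset_prod, Polynomial.eval_finsetSum] using
    congrArg (Polynomial.eval x) (prod_X_add_C_eq_sum_esymm s)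

theorem nonneg_of_esymm_nonneg [CommRing R] [LinearOrder R] [IsStrictOrderedRing R] {s : Multiset R}
    (hs : ∀ j, 1 ≤ j → j ≤ card s → 0 ≤ s.esymm j) {r : R} (hr : r ∈ s) : 0 ≤ r := by
  by_contra! hneg
  have hvanish : (s.map (-r + ·)).prod = 0 :=
    prod_eq_zero (mem_map.mpr ⟨r, hr, neg_add_cancel r⟩)
  have hesymm_zero : s.esymm 0 = 1 := by simp [esymm]
  have hpos : 0 < ∑ j ∈ Finset.range (card s + 1), s.esymm j * (-r) ^ (card s - j) := by
    refine Finset.sum_pos' (fun j hj => ?_) ⟨0, by simp, by simp [hesymm_zero, neg_pos.mpr hneg]⟩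
    rcases Nat.eq_zero_or_pos j with rfl | hj0
    · simp [hesymm_zero, (neg_pos.mpr hneg).le]
    · exact mul_nonneg (hs j hj0 (Nat.lt_succ_iff.mp (Finset.mem_range.mp hj)))
        (pow_nonneg (neg_nonneg.mpr hneg.le) _)
  rw [← prod_map_add_eq_sum_esymm, hvanish] at hpos
  exact hpos.false

end Multiset

namespace MvPolynomial

variable {σ R : Type*} [Fintype σ]

theorem eval_esymm_eq_multiset_esymm [CommSemiring R] (a : σ → R) (n : ℕ) :
    eval a (esymm σ R n) = (Finset.univ.val.map a).esymm n :=
  aeval_esymm_eq_multiset_esymm σ R n a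

theorem eval_hsymm [DecidableEq σ] [CommSemiring R] (a : σ → R) (n : ℕ) :
    eval a (hsymm σ R n) = ∑ s : Sym σ n, (s.1.map a).prod := by
  simp [hsymm, ← Multiset.prod_hom']

theorem nonneg_of_eval_esymm_nonneg [CommRing R] [LinearOrder R] [IsStrictOrderedRing R]
    (a : σ → R) (ha : ∀ u, 1 ≤ u → u ≤ Fintype.card σ → 0 ≤ eval a (esymm σ R u)) (i : σ) :
    0 ≤ a i :=
  Multiset.nonneg_of_esymm_nonneg (s := Finset.univ.val.map a)
    (by simpa [eval_esymm_eq_multiset_esymm] using ha)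
    (Multiset.mem_map_of_mem a (Finset.mem_univ i))

theorem pow_le_eval_hsymm [DecidableEq σ] [CommSemiring R] [PartialOrder R] [IsOrderedRing R]
    {a : σ → R} (ha : ∀ i, 0 ≤ a i) (i : σ) (n : ℕ) : a i ^ n ≤ eval a (hsymm σ R n) := by
  rw [eval_hsymm]
  convert Finset.single_le_sum (f := fun s : Sym σ n => (s.1.map a).prod)
    (fun s _ => Multiset.prod_nonneg fun x hx => ?_) (Finset.mem_univ (Sym.replicate n i))
  · simp [Sym.replicate]
  · obtain ⟨j, -, rfl⟩ := Multiset.mem_map.mp hx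
    exact ha j

end MvPolynomial

theorem eq_zero_of_hsymm_eq_zero_of_esymm_nonneg_general (n m : ℕ) (hm : 1 < m)
    (a : Fin (n - m + 2) → ℤ)
    (h0 : eval a (hsymm (Fin (n - m + 2)) ℤ m) = 0)
    (he : ∀ u, 1 ≤ u → u ≤ n - m + 2 → 0 ≤ eval a (esymm (Fin (n - m + 2)) ℤ u)) :
    ∀ i, a i = 0 := by
  have hnonneg : ∀ i, 0 ≤ a i := nonneg_of_eval_esymm_nonneg a (by simpa using he)
  intro i
  have hpow : a i ^ m ≤ 0 := h0 ▸ pow_le_eval_hsymm hnonneg i m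
  exact pow_eq_zero_iff (by omega) |>.mp (hpow.antisymm (pow_nonneg (hnonneg i) m))

/-- Arithmetic core of the constancy of morphisms `ℙ^m → A_n/P(1,2,…,n−m+2)`:
if integers `a_1,…,a_{n−m+2}` satisfy `Σ_m(a) = 0` and `σ_u(a) ≥ 0` for all
`1 ≤ u ≤ n−m+2`, then all `a_i = 0`. -/
theorem eq_zero_of_hsymm_eq_zero_of_esymm_nonneg (n m : ℕ) (hm : 1 < m) (hmn : m ≤ n)
    (a : Fin (n - m + 2) → ℤ)
    (h0 : eval a (hsymm (Fin (n - m + 2)) ℤ m) = 0)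
    (he : ∀ u, 1 ≤ u → u ≤ n - m + 2 → 0 ≤ eval a (esymm (Fin (n - m + 2)) ℤ u)) :
    ∀ i, a i = 0 :=
  eq_zero_of_hsymm_eq_zero_of_esymm_nonneg_general n m hm a h0 he
end
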